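/- arXiv:1110.5200 — 3 statements merged into one kernel-verified Lean document; each statement's English description precedes it below -/
import Mathlib

section
/- Let n ≥ 1 and let (a_0, ..., a_n) be complex numbers, not all zero, with Σ_k |a_k|^2 = 1. Then the maximum over (θ,φ) ∈ [0,π] × [0,2π) of |Σ_{k=0}^n a_k e^{i k φ} √(binom(n,k)) cos(θ/2)^{n−k} sin(θ/2)^k|^2 is at least 1/(n+1). -/
/-!
Write the overlap as `‖∑ k, b k * exp (I * k * φ)‖ ^ 2` with
`b k = a k * √(n choose k) * cos (θ/2) ^ (n - k) * sin (θ/2) ^ k`. Averaging over the `n + 1`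
phases `φ = 2πj/(n+1)` kills the cross terms (orthogonality of roots of unity), so some
phase gives at least `∑ k, ‖b k‖ ^ 2 = ∑ k, ‖a k‖ ^ 2 * B_{n,k}(x)`, where `x = sin (θ/2) ^ 2`
and `B_{n,k}` are the Bernstein polynomials. Each `B_{n,k}` integrates to `1/(n+1)` over
`[0,1]`, so some `x` gives at least `∑ k, ‖a k‖ ^ 2 / (n + 1) = 1 / (n + 1)`.
-/

open Finset Polynomial Complex ComplexConjugate

theorem integral_pow_mul_one_sub_pow (k m : ℕ) :
    ∫ x in (0:ℝ)..1, x ^ k * (1 - x) ^ m =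
      (k.factorial * m.factorial : ℝ) / (k + m + 1).factorial := by
  induction m generalizing k with
  | zero => simp [Nat.factorial_succ]; field_simp
  | succ m ih =>
    have hint : ∀ j : ℕ,
        IntervalIntegrable (fun x : ℝ => x ^ j * (1 - x) ^ m) MeasureTheory.volume 0 1 :=
      fun j => (by fun_prop : Continuous _).intervalIntegrable 0 1
    have hsplit : ∀ x : ℝ,
        x ^ k * (1 - x) ^ (m + 1) = x ^ k * (1 - x) ^ m - x ^ (k + 1) * (1 - x) ^ m :=
      fun x => by ring
    simp_rw [hsplit]
    rw [intervalIntegral.integral_sub (hint k) (hint (k + 1)), ih k, ih (k + 1),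
      show k + 1 + m + 1 = k + (m + 1) + 1 by ring, show k + (m + 1) + 1 = k + m + 1 + 1 by ring]
    push_cast [Nat.factorial_succ]
    field_simp
    ring

theorem integral_bernsteinPolynomial_eval {n k : ℕ} (hk : k ≤ n) :
    ∫ x in (0:ℝ)..1, (bernsteinPolynomial ℝ n k).eval x = 1 / (n + 1) := by
  have hchoose : (n.choose k * (k.factorial * (n - k).factorial) : ℝ) = n.factorial := by
    exact_mod_cast by rw [← mul_assoc]; exact Nat.choose_mul_factorial_mul_factorial hk
  simp only [bernsteinPolynomial, eval_mul, eval_pow, eval_sub, eval_one, eval_X, eval_natCast,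
    mul_assoc, intervalIntegral.integral_const_mul, integral_pow_mul_one_sub_pow,
    Nat.add_sub_cancel' hk, Nat.factorial_succ]
  push_cast
  rw [← mul_div_assoc, hchoose]
  field_simp

theorem exists_mem_Icc_integral_le_mul {f : ℝ → ℝ} {a b : ℝ} (hab : a ≤ b)
    (hf : ContinuousOn f (Set.Icc a b)) :
    ∃ c ∈ Set.Icc a b, ∫ x in a..b, f x ≤ (b - a) * f c := by
  obtain ⟨c, hc, hmax⟩ := isCompact_Icc.exists_isMaxOn (Set.nonempty_Icc.2 hab) hf
  refine ⟨c, hc, ?_⟩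
  calc ∫ x in a..b, f x ≤ ∫ _ in a..b, f c :=
        intervalIntegral.integral_mono_on hab (hf.intervalIntegrable_of_Icc hab)
          intervalIntegrable_const fun x hx => hmax hx
    _ = (b - a) * f c := by rw [intervalIntegral.integral_const, smul_eq_mul]

theorem exists_le_sum_mul_bernsteinPolynomial_eval (n : ℕ) (p : Fin (n + 1) → ℝ) :
    ∃ x ∈ Set.Icc (0:ℝ) 1,
      (∑ k, p k) / (n + 1) ≤
        ∑ k : Fin (n + 1), p k * (bernsteinPolynomial ℝ n k).eval x := by
  obtain ⟨x, hx, hle⟩ := exists_mem_Icc_integral_le_mul zero_le_one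
    (f := fun x => ∑ k : Fin (n + 1), p k * (bernsteinPolynomial ℝ n k).eval x) (by fun_prop)
  refine ⟨x, hx, ?_⟩
  rw [intervalIntegral.integral_finsetSum
    fun k _ => (by fun_prop : Continuous _).intervalIntegrable 0 1] at hle
  simp only [intervalIntegral.integral_const_mul,
    integral_bernsteinPolynomial_eval (Nat.lt_succ_iff.mp (Fin.is_lt _))] at hle
  rwa [← Finset.sum_mul, sub_zero, one_mul, ← div_eq_mul_one_div] at hle

theorem IsPrimitiveRoot.sum_range_pow_mul_inv_pow {K : Type*} [Field K] {ζ : K} {N : ℕ}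
    (hζ : IsPrimitiveRoot ζ N) {k l : ℕ} (hk : k < N) (hl : l < N) :
    ∑ j ∈ range N, (ζ ^ k * (ζ ^ l)⁻¹) ^ j = if k = l then (N : K) else 0 := by
  have hζl : ζ ^ l ≠ 0 := pow_ne_zero l (hζ.ne_zero (by omega))
  split_ifs with hkl
  · simp [hkl, hζl]
  · have hw : ζ ^ k * (ζ ^ l)⁻¹ ≠ 1 := fun h =>
      hkl (hζ.pow_inj hk hl ((mul_inv_eq_one₀ hζl).mp h))
    have hwN : (ζ ^ k * (ζ ^ l)⁻¹) ^ N = 1 := by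
      rw [mul_pow, inv_pow, ← pow_mul, ← pow_mul, pow_mul', pow_mul' ζ l, hζ.pow_eq_one,
        one_pow, one_pow, inv_one, mul_one]
    have := geom_sum_mul (ζ ^ k * (ζ ^ l)⁻¹) N
    rw [hwN, sub_self] at this
    exact (mul_eq_zero.mp this).resolve_right (sub_ne_zero.mpr hw)

theorem IsPrimitiveRoot.sum_norm_sq_sum_mul_pow {ζ : ℂ} {N : ℕ} (hζ : IsPrimitiveRoot ζ N)
    (b : Fin N → ℂ) :
    ∑ j : Fin N, ‖∑ k : Fin N, b k * ζ ^ ((k : ℕ) * j)‖ ^ 2 =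
      N * ∑ k : Fin N, ‖b k‖ ^ 2 := by
  rcases N.eq_zero_or_pos with rfl | hN
  · simp
  have hconj : ∀ m j : ℕ, conj ((ζ ^ m) ^ j) = ((ζ ^ m)⁻¹) ^ j := fun m j => by
    rw [map_pow, map_pow, ← Complex.inv_eq_conj (hζ.norm'_eq_one hN.ne'), inv_pow]
  apply Complex.ofReal_injective
  push_cast
  simp_rw [← Complex.mul_conj', map_sum, map_mul, Finset.sum_mul_sum, pow_mul, hconj]
  calc ∑ j : Fin N, ∑ k : Fin N, ∑ l : Fin N,
        b k * (ζ ^ (k : ℕ)) ^ (j : ℕ) * (conj (b l) * ((ζ ^ (l : ℕ))⁻¹) ^ (j : ℕ))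
      = ∑ k : Fin N, ∑ l : Fin N,
          b k * conj (b l) * ∑ j ∈ range N, (ζ ^ (k : ℕ) * (ζ ^ (l : ℕ))⁻¹) ^ j := by
        rw [Finset.sum_comm]
        refine Finset.sum_congr rfl fun k _ => ?_
        rw [Finset.sum_comm]
        refine Finset.sum_congr rfl fun l _ => ?_
        rw [Finset.mul_sum, ← Fin.sum_univ_eq_sum_range
          (fun j => b k * conj (b l) * (ζ ^ (k : ℕ) * (ζ ^ (l : ℕ))⁻¹) ^ j)]
        refine Finset.sum_congr rfl fun j _ => ?_
        ring
    _ = N * ∑ k : Fin N, b k * conj (b k) := by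
        simp_rw [hζ.sum_range_pow_mul_inv_pow (Fin.is_lt _) (Fin.is_lt _), Fin.val_inj, mul_ite,
          mul_zero, Finset.sum_ite_eq, Finset.mem_univ, if_true, Finset.mul_sum]
        exact Finset.sum_congr rfl fun k _ => mul_comm _ _

theorem exists_le_norm_sq_sum_mul_exp {N : ℕ} [NeZero N] (b : Fin N → ℂ) :
    ∃ φ ∈ Set.Ico (0:ℝ) (2 * Real.pi),
      ∑ k, ‖b k‖ ^ 2 ≤ ‖∑ k : Fin N, b k * exp (I * (k : ℕ) * φ)‖ ^ 2 := by
  have hζ := Complex.isPrimitiveRoot_exp N (NeZero.ne N)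
  have hsum : ∑ _j : Fin N, ∑ k, ‖b k‖ ^ 2
      = ∑ j : Fin N,
          ‖∑ k : Fin N, b k * exp (2 * Real.pi * I / N) ^ ((k : ℕ) * j)‖ ^ 2 := by
    rw [hζ.sum_norm_sq_sum_mul_pow, Finset.sum_const, Finset.card_univ, Fintype.card_fin,
      nsmul_eq_mul]
  obtain ⟨j, -, hj⟩ := Finset.exists_le_of_sum_le Finset.univ_nonempty hsum.le
  refine ⟨2 * Real.pi * j / N, ⟨by positivity, ?_⟩, ?_⟩
  · rw [div_lt_iff₀ (Nat.cast_pos.mpr (Nat.pos_of_neZero N)),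
      mul_lt_mul_iff_right₀ Real.two_pi_pos]
    exact_mod_cast j.is_lt
  · refine hj.trans_eq (congrArg (‖·‖ ^ 2) (Finset.sum_congr rfl fun k _ => ?_))
    rw [← Complex.exp_nat_mul]
    push_cast
    ring_nf

theorem Real.exists_mem_Icc_sin_half_sq_eq {x : ℝ} (hx : x ∈ Set.Icc (0:ℝ) 1) :
    ∃ θ ∈ Set.Icc (0:ℝ) Real.pi, Real.sin (θ / 2) ^ 2 = x := by
  have hsqrt : Real.sqrt x ∈ Set.Icc (-1:ℝ) 1 :=
    ⟨by linarith [Real.sqrt_nonneg x], Real.sqrt_le_one.mpr hx.2⟩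
  refine ⟨2 * Real.arcsin (Real.sqrt x), ⟨?_, ?_⟩, ?_⟩
  · linarith [Real.arcsin_nonneg.mpr (Real.sqrt_nonneg x)]
  · linarith [Real.arcsin_le_pi_div_two (Real.sqrt x)]
  · rw [mul_div_cancel_left₀ _ two_ne_zero, Real.sin_arcsin hsqrt.1 hsqrt.2, Real.sq_sqrt hx.1]

theorem stmt_2_general (n : ℕ) (a : Fin (n + 1) → ℂ)
    (ha : ∑ k, ‖a k‖ ^ 2 = 1) :
    ∃ θ ∈ Set.Icc (0:ℝ) Real.pi, ∃ φ ∈ Set.Ico (0:ℝ) (2 * Real.pi),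
      (1 : ℝ) / (n + 1) ≤
        ‖∑ k : Fin (n + 1),
          a k * Complex.exp (Complex.I * ((k : ℕ) : ℂ) * (φ : ℂ)) *
            ((Real.sqrt (n.choose (k : ℕ)) : ℝ) : ℂ) *
            ((Real.cos (θ / 2) : ℝ) : ℂ) ^ (n - (k : ℕ)) *
            ((Real.sin (θ / 2) : ℝ) : ℂ) ^ (k : ℕ)‖ ^ 2 := by
  obtain ⟨x, hx, hbern⟩ := exists_le_sum_mul_bernsteinPolynomial_eval n (‖a ·‖ ^ 2)
  obtain ⟨θ, hθ, hsin⟩ := Real.exists_mem_Icc_sin_half_sq_eq hx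
  have hcos : Real.cos (θ / 2) ^ 2 = 1 - x := by
    rw [← hsin, ← Real.sin_sq_add_cos_sq (θ / 2)]; ring
  obtain ⟨φ, hφ, hphase⟩ := exists_le_norm_sq_sum_mul_exp fun k : Fin (n + 1) =>
    a k * ((Real.sqrt (n.choose (k : ℕ)) : ℝ) : ℂ) *
      ((Real.cos (θ / 2) : ℝ) : ℂ) ^ (n - (k : ℕ)) *
      ((Real.sin (θ / 2) : ℝ) : ℂ) ^ (k : ℕ)
  refine ⟨θ, hθ, φ, hφ, ?_⟩
  calc (1 : ℝ) / (n + 1)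
        ≤ ∑ k : Fin (n + 1), ‖a k‖ ^ 2 * (bernsteinPolynomial ℝ n k).eval x := by
        rwa [ha] at hbern
    _ = _ := Finset.sum_congr rfl fun k _ => by
        simp only [bernsteinPolynomial, eval_mul, eval_pow, eval_sub, eval_one, eval_X,
          eval_natCast, norm_mul, norm_pow, Complex.norm_real, Real.norm_eq_abs, mul_pow,
          sq_abs, Real.sq_sqrt (Nat.cast_nonneg _)]
        rw [pow_right_comm _ _ 2, sq_abs, hcos, pow_right_comm _ _ 2, sq_abs, hsin]
        ring
    _ ≤ _ := hphase
    _ = _ := congrArg (‖·‖ ^ 2) (Finset.sum_congr rfl fun k _ => by ring)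

theorem stmt_2 (n : ℕ) (hn : 1 ≤ n) (a : Fin (n + 1) → ℂ)
    (hne : ∃ k, a k ≠ 0)
    (ha : ∑ k, ‖a k‖ ^ 2 = 1) :
    ∃ θ ∈ Set.Icc (0:ℝ) Real.pi, ∃ φ ∈ Set.Ico (0:ℝ) (2 * Real.pi),
      (1 : ℝ) / (n + 1) ≤
        ‖∑ k : Fin (n + 1),
          a k * Complex.exp (Complex.I * ((k : ℕ) : ℂ) * (φ : ℂ)) *
            ((Real.sqrt (n.choose (k : ℕ)) : ℝ) : ℂ) *
            ((Real.cos (θ / 2) : ℝ) : ℂ) ^ (n - (k : ℕ)) *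
            ((Real.sin (θ / 2) : ℝ) : ℂ) ^ (k : ℕ)‖ ^ 2 :=
  stmt_2_general n a ha
end

section
/- Let ψ : (Fin n → Fin 2) → ℂ be the coefficient function of an n-partite qubit state with nonnegative real coefficients (a positive state), and for each product state Λ = ⊗_j σ_j with σ_j = b_0^j|0⟩ + b_1^j|1⟩, define Λ⁺ = ⊗_j (|b_0^j| |0⟩ + |b_1^j| |1⟩). Then |⟨ψ|Λ⁺⟩| ≥ |⟨ψ|Λ⟩|. Consequently, if Λ maximizes |⟨ψ|·⟩| over normalized product states, then so does the positive product state Λ⁺. -/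
/-! Replacing each amplitude by its modulus turns every term of the overlap into its own
norm, so the triangle inequality becomes the claimed comparison. -/

/-- Overlap `⟨ψ|Λ⟩` of a positive (real, nonnegative coefficient) `n`-qubit state `ψ`
with the product state `Λ = ⊗ⱼ (b j 0 |0⟩ + b j 1 |1⟩)`. -/
noncomputable def productOverlap (n : ℕ) (ψ : (Fin n → Fin 2) → ℂ)
    (b : Fin n → Fin 2 → ℂ) : ℂ :=
  ∑ i : Fin n → Fin 2, ψ i * ∏ j, b j (i j)

open scoped ComplexOrder

theorem productOverlap_norm_eq {n : ℕ} {ψ : (Fin n → Fin 2) → ℂ} (hψ : ∀ i, 0 ≤ ψ i)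
    (b : Fin n → Fin 2 → ℂ) :
    productOverlap n ψ (fun j v => (‖b j v‖ : ℂ)) =
      ((∑ i, ‖ψ i * ∏ j, b j (i j)‖ : ℝ) : ℂ) := by
  simp only [productOverlap, norm_mul, norm_prod, Complex.ofReal_sum, Complex.ofReal_mul,
    Complex.ofReal_prod, ← Complex.eq_coe_norm_of_nonneg (hψ _)]

theorem norm_productOverlap_le_norm_productOverlap_abs {n : ℕ} {ψ : (Fin n → Fin 2) → ℂ}
    (hψ : ∀ i, 0 ≤ ψ i) (b : Fin n → Fin 2 → ℂ) :
    ‖productOverlap n ψ b‖ ≤ ‖productOverlap n ψ (fun j v => (‖b j v‖ : ℂ))‖ := by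
  rw [productOverlap_norm_eq hψ, Complex.norm_of_nonneg (by positivity)]
  exact norm_sum_le _ _

theorem stmt_6 (n : ℕ) (ψ : (Fin n → Fin 2) → ℂ)
    (hpos : ∀ i, 0 ≤ (ψ i).re ∧ (ψ i).im = 0)
    (b : Fin n → Fin 2 → ℂ) :
    norm (productOverlap n ψ b) ≤
      norm (productOverlap n ψ (fun j v => ((norm (b j v) : ℝ) : ℂ))) ∧
    ((∀ j, ∑ v, norm (b j v) ^ 2 = 1) →
      (∀ b' : Fin n → Fin 2 → ℂ, (∀ j, ∑ v, norm (b' j v) ^ 2 = 1) →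
        norm (productOverlap n ψ b') ≤ norm (productOverlap n ψ b)) →
      ∀ b' : Fin n → Fin 2 → ℂ, (∀ j, ∑ v, norm (b' j v) ^ 2 = 1) →
        norm (productOverlap n ψ b') ≤
          norm (productOverlap n ψ (fun j v => ((norm (b j v) : ℝ) : ℂ)))) := by
  have hψ : ∀ i, 0 ≤ ψ i := fun i => Complex.nonneg_iff.2 ⟨(hpos i).1, (hpos i).2.symm⟩
  have key := norm_productOverlap_le_norm_productOverlap_abs hψ b
  exact ⟨key, fun _ hmax b' hb' => (hmax b' hb').trans key⟩
end

section
/- Let ψ = a_{00}|00⟩ + a_{01}|01⟩ + a_{10}|10⟩ + a_{11}|11⟩ be a normalized two-qubit state such that |00⟩ is a global maximum of λ ↦ |⟨ψ|λ⟩| over normalized product states λ. Then a_{01} = a_{10} = 0 and |a_{00}|² ≥ |a_{11}|². -/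
/-! Fixing one factor of the product state to a basis vector, the other factor ranges over all unit
vectors, and the supremum of `‖∑ v j * d j‖` over unit `d` is the ℓ² norm of `v`. So maximality at
`|00⟩` bounds the ℓ² norm of every row and every column of `a` by `‖a 0 0‖`. Row 0 and column 0
contain `a 0 0` itself, which forces `a 0 1 = a 1 0 = 0`; row 1 is then `(0, a 1 1)`. -/

open ComplexConjugate

lemma sum_norm_sq_le_sq_of_forall_unit {ι : Type*} [Fintype ι] (v : ι → ℂ) {M : ℝ}
    (h : ∀ d : ι → ℂ, ∑ i, ‖d i‖ ^ 2 = 1 → ‖∑ i, v i * d i‖ ≤ M) :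
    ∑ i, ‖v i‖ ^ 2 ≤ M ^ 2 := by
  set S := ∑ i, ‖v i‖ ^ 2
  rcases (show 0 ≤ S by positivity).eq_or_lt with hS | hS
  · rw [← hS]; positivity
  set r := Real.sqrt S
  have hr : 0 < r := Real.sqrt_pos.mpr hS
  have hr2 : r ^ 2 = S := Real.sq_sqrt hS.le
  -- the maximiser is the normalised conjugate of `v` (equality in Cauchy–Schwarz)
  have hunit : ∑ i, ‖conj (v i) / r‖ ^ 2 = 1 := by
    simp only [norm_div, Complex.norm_conj, Complex.norm_real, Real.norm_of_nonneg hr.le,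
      div_pow, ← Finset.sum_div, hr2]
    exact div_self hS.ne'
  have hpair : ∑ i, v i * (conj (v i) / r) = r := by
    simp only [← mul_div_assoc, Complex.mul_conj, ← Finset.sum_div, Complex.normSq_eq_norm_sq]
    rw [div_eq_iff (by exact_mod_cast hr.ne'), ← Complex.ofReal_mul, ← sq, hr2]
    push_cast [S]; rfl
  have hrM : r ≤ M := by
    simpa [hpair, abs_of_pos hr] using h _ hunit
  rw [← hr2]
  exact pow_le_pow_left₀ hr.le hrM 2

lemma sum_norm_sq_single {ι : Type*} [Fintype ι] [DecidableEq ι] (k : ι) :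
    ∑ i, ‖(Pi.single k 1 : ι → ℂ) i‖ ^ 2 = 1 := by
  rw [Finset.sum_eq_single k (fun i _ hi => by simp [hi]) (by simp)]
  simp

lemma sum_sum_mul_single_mul {ι κ : Type*} [Fintype ι] [Fintype κ] [DecidableEq ι]
    (f : ι → κ → ℂ) (k : ι) (d : κ → ℂ) :
    ∑ i, ∑ j, f i j * (Pi.single k 1 : ι → ℂ) i * d j = ∑ j, f k j * d j := by
  simp [Pi.single_apply]

lemma sum_sum_mul_mul_single {ι κ : Type*} [Fintype ι] [Fintype κ] [DecidableEq κ]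
    (f : ι → κ → ℂ) (c : ι → ℂ) (k : κ) :
    ∑ i, ∑ j, f i j * c i * (Pi.single k 1 : κ → ℂ) j = ∑ i, f i k * c i := by
  simp [Pi.single_apply]

theorem stmt_8_general (a : Fin 2 → Fin 2 → ℂ)
    (hmax : ∀ c d : Fin 2 → ℂ,
      (∑ i, ‖c i‖ ^ 2 = 1) → (∑ j, ‖d j‖ ^ 2 = 1) →
      ‖∑ i, ∑ j, (starRingEnd ℂ) (a i j) * c i * d j‖ ≤ ‖a 0 0‖) :
    a 0 1 = 0 ∧ a 1 0 = 0 ∧ ‖a 1 1‖ ^ 2 ≤ ‖a 0 0‖ ^ 2 := by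
  have hrow : ∀ i, ∑ j, ‖a i j‖ ^ 2 ≤ ‖a 0 0‖ ^ 2 := fun i => by
    simpa only [Complex.norm_conj] using
      sum_norm_sq_le_sq_of_forall_unit (fun j => conj (a i j)) fun d hd => by
        simpa only [sum_sum_mul_single_mul] using hmax _ d (sum_norm_sq_single i) hd
  have hcol : ∀ j, ∑ i, ‖a i j‖ ^ 2 ≤ ‖a 0 0‖ ^ 2 := fun j => by
    simpa only [Complex.norm_conj] using
      sum_norm_sq_le_sq_of_forall_unit (fun i => conj (a i j)) fun c hc => by
        simpa only [sum_sum_mul_mul_single] using hmax c _ hc (sum_norm_sq_single j)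
  have hrow0 := hrow 0
  have hrow1 := hrow 1
  have hcol0 := hcol 0
  simp only [Fin.sum_univ_two] at hrow0 hrow1 hcol0
  refine ⟨?_, ?_, by nlinarith [sq_nonneg ‖a 1 0‖]⟩
  · exact norm_eq_zero.mp (by nlinarith [norm_nonneg (a 0 1)])
  · exact norm_eq_zero.mp (by nlinarith [norm_nonneg (a 1 0)])

theorem stmt_8 (a : Fin 2 → Fin 2 → ℂ)
    (hnorm : ∑ i, ∑ j, ‖a i j‖ ^ 2 = 1)
    (hmax : ∀ c d : Fin 2 → ℂ,
      (∑ i, ‖c i‖ ^ 2 = 1) → (∑ j, ‖d j‖ ^ 2 = 1) →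
      ‖∑ i, ∑ j, (starRingEnd ℂ) (a i j) * c i * d j‖ ≤ ‖a 0 0‖) :
    a 0 1 = 0 ∧ a 1 0 = 0 ∧ ‖a 1 1‖ ^ 2 ≤ ‖a 0 0‖ ^ 2 :=
  stmt_8_general a hmax
end
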